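/- Let γ : ℕ → ℂ with associated polynomials P_n(x) = Σ_{k=0}^n (γ_k/k!) D^k[x^n] for n ≥ 0. Then {P_n}_{n=0}^∞ is a monic orthogonal polynomial sequence (an OPS in which every P_n has leading coefficient 1) if and only if there exist α, β ∈ ℂ with α ≠ 0 such that for every k ≥ 0, γ_k equals the k-th derivative at 0 of the entire function z ↦ exp(−(α/2)z² − βz). -/

import Mathlib

open Polynomial Finset

/-!
`P n = ∑ₖ C(n,k) γₖ Xⁿ⁻ᵏ` is the Appell sequence `appell γ n`, and `P (n + 2) - X * P (n + 1)`
is the Appell polynomial of the shifted sequence `k ↦ γ (k + 1)`. If the `P n` are orthogonal,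
they satisfy a three-term recurrence `X P (n+1) = P (n+2) + b P (n+1) + c P n` with
`c L(P n ^ 2) = L(P (n+1) ^ 2) ≠ 0`; comparing three coefficients of it forces
`γ (k+2) = γ 1 γ (k+1) - α (k+1) γ k` with `α = γ 1 ^ 2 - γ 2 ≠ 0`. Since `f = exp (-(α/2) z² - β z)`
satisfies `f' = (-α z - β) f`, Leibniz's rule shows that this recurrence (with `γ 0 = 1`,
`γ 1 = -β`) characterises the derivatives of `f` at `0`. Conversely, the recurrence gives
`X P (n+1) = P (n+2) - γ 1 P (n+1) + α (n+1) P n`, and Favard's argument shows that the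
coordinate functional of `P 0` in the basis `(P n)` makes the sequence orthogonal, with
`L (P n ^ 2) = n! αⁿ`.
-/

namespace Polynomial

variable {R : Type*} [CommRing R]

noncomputable def appell (δ : ℕ → R) (n : ℕ) : R[X] :=
  ∑ i ∈ range (n + 1), C (n.choose i * δ (n - i)) * X ^ i

lemma coeff_appell (δ : ℕ → R) (n i : ℕ) :
    (appell δ n).coeff i = if i ≤ n then n.choose i * δ (n - i) else 0 := by
  simp only [appell, finsetSum_coeff, coeff_C_mul_X_pow, Finset.sum_ite_eq, mem_range,
    Nat.lt_succ_iff]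

lemma natDegree_appell_le (δ : ℕ → R) (n : ℕ) : (appell δ n).natDegree ≤ n :=
  natDegree_le_iff_coeff_eq_zero.2 fun i hi => by simp [coeff_appell, not_le.2 hi]

lemma coeff_appell_self (δ : ℕ → R) (n : ℕ) : (appell δ n).coeff n = δ 0 := by
  simp [coeff_appell]

lemma monic_appell {δ : ℕ → R} (h0 : δ 0 = 1) (n : ℕ) : (appell δ n).Monic :=
  monic_of_natDegree_le_of_coeff_eq_one n (natDegree_appell_le δ n) (by rw [coeff_appell_self, h0])

lemma degree_appell [Nontrivial R] {δ : ℕ → R} (h0 : δ 0 = 1) (n : ℕ) :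
    (appell δ n).degree = n :=
  degree_eq_of_le_of_coeff_ne_zero (degree_le_of_natDegree_le (natDegree_appell_le δ n))
    (by simp [coeff_appell_self, h0])

lemma appell_succ (δ : ℕ → R) (n : ℕ) :
    appell δ (n + 1) = X * appell δ n + appell (fun k => δ (k + 1)) n := by
  ext (_ | i)
  · simp [coeff_appell]
  · rw [coeff_add, coeff_X_mul]
    simp only [coeff_appell]
    rcases lt_trichotomy i n with hi | rfl | hi
    · obtain ⟨j, rfl⟩ := Nat.exists_eq_add_of_lt hi
      simp only [if_pos (by omega : i + 1 ≤ i + j + 1 + 1), if_pos (by omega : i ≤ i + j + 1),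
        if_pos (by omega : i + 1 ≤ i + j + 1), Nat.choose_succ_succ',
        show i + j + 1 + 1 - (i + 1) = j + 1 by omega, show i + j + 1 - i = j + 1 by omega,
        show i + j + 1 - (i + 1) = j by omega]
      push_cast; ring
    · simp
    · simp [show ¬i + 1 ≤ n + 1 by omega, show ¬i ≤ n by omega, show ¬i + 1 ≤ n by omega]

lemma appell_shift_of_recurrence {δ : ℕ → R} {α : R} (h0 : δ 0 = 1)
    (hrec : ∀ k : ℕ, δ (k + 2) = δ 1 * δ (k + 1) - α * (k + 1) * δ k) (n : ℕ) :
    appell (fun k => δ (k + 1)) (n + 1) =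
      C (δ 1) * appell δ (n + 1) - C (α * (n + 1)) * appell δ n := by
  ext i
  simp only [coeff_sub, coeff_C_mul, coeff_appell]
  rcases lt_trichotomy i (n + 1) with hi | rfl | hi
  · obtain ⟨j, rfl⟩ := Nat.exists_eq_add_of_le (Nat.lt_succ_iff.1 hi)
    have hchoose : ((i + j).choose i : R) * (i + j + 1) = (i + j + 1).choose i * (j + 1) := by
      have := Nat.choose_mul_succ_eq (i + j) i
      rw [show i + j + 1 - i = j + 1 by omega] at this
      exact_mod_cast congrArg (Nat.cast : ℕ → R) this
    simp only [if_pos (by omega : i ≤ i + j + 1), if_pos (by omega : i ≤ i + j),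
      show i + j + 1 - i = j + 1 by omega, show i + j - i = j by omega, hrec j]
    push_cast
    linear_combination (α * δ j) * hchoose
  · simp [h0]
  · simp [show ¬i ≤ n + 1 by omega, show ¬i ≤ n by omega]

lemma X_mul_appell_of_recurrence {δ : ℕ → R} {α : R} (h0 : δ 0 = 1)
    (hrec : ∀ k : ℕ, δ (k + 2) = δ 1 * δ (k + 1) - α * (k + 1) * δ k) (n : ℕ) :
    X * appell δ (n + 1) =
      appell δ (n + 2) + C (-δ 1) * appell δ (n + 1) + C (α * (n + 1)) * appell δ n := by
  rw [appell_succ δ (n + 1), appell_shift_of_recurrence h0 hrec, C_neg]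
  ring

lemma recurrence_of_X_mul_appell {δ : ℕ → R} (h0 : δ 0 = 1) {n : ℕ} {b c : R}
    (h : X * appell δ (n + 1) = appell δ (n + 2) + C b * appell δ (n + 1) + C c * appell δ n) :
    c = (n + 1) * (δ 1 ^ 2 - δ 2) ∧ δ (n + 2) = δ 1 * δ (n + 1) - c * δ n := by
  have hshift : appell (fun k => δ (k + 1)) (n + 1) =
      -(C b * appell δ (n + 1) + C c * appell δ n) := by
    rw [appell_succ δ (n + 1)] at h
    linear_combination -h
  have coeff_top : δ 1 = -b := by
    simpa [coeff_appell, h0] using congrArg (coeff · (n + 1)) hshift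
  have coeff_next : (n + 1) * δ 2 = -c - b * ((n + 1) * δ 1) := by
    simpa [coeff_appell, h0, sub_eq_add_neg, add_comm] using congrArg (coeff · n) hshift
  have coeff_zero : δ (n + 2) = -(c * δ n) - b * δ (n + 1) := by
    simpa [coeff_appell, sub_eq_add_neg] using congrArg (coeff · 0) hshift
  exact ⟨by linear_combination coeff_next - (n + 1) * δ 1 * coeff_top,
    by linear_combination coeff_zero - δ (n + 1) * coeff_top⟩

lemma sum_iterate_derivative_X_pow_eq_appell {K : Type*} [Field K] [CharZero K] (γ : ℕ → K)
    (n : ℕ) :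
    ∑ k ∈ range (n + 1), C (γ k / k.factorial) * derivative^[k] (X ^ n : K[X]) =
      appell γ n := by
  rw [appell, ← sum_range_reflect]
  refine sum_congr rfl fun i hi => ?_
  have hi : i ≤ n := Nat.lt_succ_iff.1 (mem_range.1 hi)
  rw [show n + 1 - 1 - i = n - i by omega, iterate_derivative_X_pow_eq_C_mul,
    Nat.sub_sub_self hi, ← mul_assoc, ← C_mul, Nat.descFactorial_eq_factorial_mul_choose,
    Nat.choose_symm hi]
  congr 2
  have : ((n - i).factorial : K) ≠ 0 := Nat.cast_ne_zero.2 (Nat.factorial_ne_zero _)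
  push_cast
  field_simp

section Favard

variable (L : R[X] →ₗ[R] R)

lemma map_mul_eq_sum_coeff_mul (p q : R[X]) {N : ℕ} (hp : p.natDegree < N) :
    L (p * q) = ∑ i ∈ range N, p.coeff i * L (X ^ i * q) := by
  conv_lhs => rw [p.as_sum_range' N hp, sum_mul, map_sum]
  refine sum_congr rfl fun i _ => ?_
  rw [← C_mul_X_pow_eq_monomial, mul_assoc, ← smul_eq_C_mul, map_smul, smul_eq_mul]

variable {Q : ℕ → R[X]} {b c : ℕ → R}

lemma map_X_pow_succ_mul_of_recurrence
    (hrec : ∀ n, X * Q (n + 1) = Q (n + 2) + C (b n) * Q (n + 1) + C (c n) * Q n) (k n : ℕ) :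
    L (X ^ (k + 1) * Q (n + 1)) =
      L (X ^ k * Q (n + 2)) + b n * L (X ^ k * Q (n + 1)) + c n * L (X ^ k * Q n) := by
  rw [pow_succ, mul_assoc, hrec]
  simp only [mul_add, ← smul_eq_C_mul, mul_smul_comm, map_add, map_smul, smul_eq_mul]

lemma map_X_pow_mul_eq_zero_of_recurrence
    (hrec : ∀ n, X * Q (n + 1) = Q (n + 2) + C (b n) * Q (n + 1) + C (c n) * Q n)
    (hL : ∀ n, L (Q (n + 1)) = 0) {k n : ℕ} (hkn : k < n) : L (X ^ k * Q n) = 0 := by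
  induction k generalizing n with
  | zero =>
    obtain ⟨m, rfl⟩ : ∃ m, n = m + 1 := ⟨n - 1, by omega⟩
    simpa using hL m
  | succ k ih =>
    obtain ⟨m, rfl⟩ : ∃ m, n = m + 1 := ⟨n - 1, by omega⟩
    rw [map_X_pow_succ_mul_of_recurrence L hrec, ih (by omega), ih (by omega), ih (by omega)]
    ring

lemma map_X_pow_mul_of_recurrence
    (hrec : ∀ n, X * Q (n + 1) = Q (n + 2) + C (b n) * Q (n + 1) + C (c n) * Q n)
    (hL : ∀ n, L (Q (n + 1)) = 0) (n : ℕ) :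
    L (X ^ n * Q n) = L (Q 0) * ∏ i ∈ range n, c i := by
  induction n with
  | zero => simp
  | succ n ih =>
    rw [map_X_pow_succ_mul_of_recurrence L hrec, ih, prod_range_succ,
      map_X_pow_mul_eq_zero_of_recurrence L hrec hL (by omega),
      map_X_pow_mul_eq_zero_of_recurrence L hrec hL (by omega)]
    ring

lemma map_mul_eq_zero_of_recurrence
    (hrec : ∀ n, X * Q (n + 1) = Q (n + 2) + C (b n) * Q (n + 1) + C (c n) * Q n)
    (hL : ∀ n, L (Q (n + 1)) = 0) (hdeg : ∀ n, (Q n).natDegree ≤ n) {m n : ℕ}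
    (hmn : m < n) :
    L (Q m * Q n) = 0 := by
  rw [map_mul_eq_sum_coeff_mul L _ _ (Nat.lt_succ_of_le (hdeg m))]
  refine sum_eq_zero fun i hi => ?_
  rw [map_X_pow_mul_eq_zero_of_recurrence L hrec hL (by grind), mul_zero]

lemma map_mul_self_of_recurrence
    (hrec : ∀ n, X * Q (n + 1) = Q (n + 2) + C (b n) * Q (n + 1) + C (c n) * Q n)
    (hL : ∀ n, L (Q (n + 1)) = 0) {n : ℕ} (hmonic : (Q n).Monic) (hdeg : (Q n).natDegree = n) :
    L (Q n * Q n) = L (Q 0) * ∏ i ∈ range n, c i := by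
  rw [map_mul_eq_sum_coeff_mul L _ _ (Nat.lt_succ_of_le hdeg.le), sum_range_succ,
    sum_eq_zero fun i hi => by
      rw [map_X_pow_mul_eq_zero_of_recurrence L hrec hL (mem_range.1 hi), mul_zero],
    show (Q n).coeff n = 1 by rw [← hmonic.coeff_natDegree, hdeg],
    map_X_pow_mul_of_recurrence L hrec hL]
  ring

end Favard

namespace Sequence

variable {K : Type*} [Field K] (S : Sequence K)

lemma isUnit_leadingCoeff (i : ℕ) : IsUnit (S i).leadingCoeff :=
  (leadingCoeff_ne_zero.2 (S.ne_zero i)).isUnit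

lemma repr_basis_self (i : ℕ) :
    (S.basis S.isUnit_leadingCoeff).repr (S i) = Finsupp.single i 1 := by
  simpa only [basis_eq_self] using (S.basis S.isUnit_leadingCoeff).repr_self i

lemma repr_basis_eq_zero_of_degree_lt {p : K[X]} {n i : ℕ} (hp : p.degree < n) (hi : n ≤ i) :
    (S.basis S.isUnit_leadingCoeff).repr p i = 0 := by
  have hspan : p ∈ Submodule.span K (S.basis S.isUnit_leadingCoeff '' Set.Iio n) := by
    have : (S.basis S.isUnit_leadingCoeff : ℕ → K[X]) = S := _root_.funext (S.basis_eq_self _)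
    rwa [this, S.span_degreeLT fun i _ => S.isUnit_leadingCoeff i, mem_degreeLT]
  exact Finsupp.notMem_support_iff.1 fun hmem =>
    not_lt.2 hi ((Module.Basis.mem_span_image _).1 hspan hmem)

lemma eq_C_mul_add_C_mul_of_repr_basis_eq_zero {r : K[X]} {n : ℕ}
    (h : ∀ i, i ≠ n → i ≠ n + 1 → (S.basis S.isUnit_leadingCoeff).repr r i = 0) :
    r = C ((S.basis S.isUnit_leadingCoeff).repr r (n + 1)) * S (n + 1) +
      C ((S.basis S.isUnit_leadingCoeff).repr r n) * S n := by
  rw [(S.basis S.isUnit_leadingCoeff).ext_elem_iff]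
  intro i
  simp only [← smul_eq_C_mul, map_add, map_smul, repr_basis_self, Finsupp.add_apply,
    Finsupp.smul_apply, Finsupp.single_apply, smul_eq_mul]
  by_cases hn : i = n
  · simp [hn]
  by_cases hn' : i = n + 1
  · simp [hn']
  simp [h i hn hn', Ne.symm hn, Ne.symm hn']

variable (L : K[X] →ₗ[K] K)

lemma map_mul_eq_repr_basis_mul (horth : ∀ m n, m ≠ n → L (S m * S n) = 0) (p : K[X])
    (j : ℕ) :
    L (p * S j) = (S.basis S.isUnit_leadingCoeff).repr p j * L (S j * S j) := by
  have : L ∘ₗ LinearMap.mulRight K (S j) =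
      L (S j * S j) • (S.basis S.isUnit_leadingCoeff).coord j := by
    refine (S.basis S.isUnit_leadingCoeff).ext fun i => ?_
    rw [LinearMap.smul_apply, Module.Basis.coord_apply, basis_eq_self, repr_basis_self]
    rcases eq_or_ne i j with rfl | hij
    · simp
    · simp [horth i j hij, hij]
  simpa [mul_comm] using LinearMap.congr_fun this p

lemma map_mul_eq_zero_of_degree_lt (horth : ∀ m n, m ≠ n → L (S m * S n) = 0) {p : K[X]}
    {n : ℕ} (hp : p.degree < n) : L (p * S n) = 0 := by
  rw [S.map_mul_eq_repr_basis_mul L horth, S.repr_basis_eq_zero_of_degree_lt hp le_rfl, zero_mul]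

lemma degree_X_mul_sub_lt (hS : ∀ n, (S n).Monic) (n : ℕ) :
    (X * S n - S (n + 1)).degree < ↑(n + 1) := by
  have hdeg : (X * S n).degree = (S (n + 1)).degree := by
    rw [degree_mul, degree_X, S.degree_eq, S.degree_eq]; push_cast; ring
  have hlc : (X * S n).leadingCoeff = (S (n + 1)).leadingCoeff := by
    rw [(monic_X.mul (hS n)).leadingCoeff, (hS (n + 1)).leadingCoeff]
  simpa [hdeg] using degree_sub_lt_right hdeg (S.ne_zero _) hlc

lemma exists_three_term_recurrence (horth : ∀ m n, m ≠ n → L (S m * S n) = 0)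
    (hne : ∀ n, L (S n * S n) ≠ 0) (hS : ∀ n, (S n).Monic) (n : ℕ) :
    ∃ b c : K, X * S (n + 1) = S (n + 2) + C b * S (n + 1) + C c * S n ∧
      c * L (S n * S n) = L (S (n + 1) * S (n + 1)) := by
  set B := S.basis S.isUnit_leadingCoeff
  set r := X * S (n + 1) - S (n + 2) with hr
  have hrepr_high {i : ℕ} (hi : n + 2 ≤ i) : B.repr r i = 0 :=
    S.repr_basis_eq_zero_of_degree_lt (S.degree_X_mul_sub_lt hS (n + 1)) hi
  have hrepr_low {j : ℕ} (hj : j < n) : B.repr r j = 0 := by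
    have hdeg : (X * S j).degree < ↑(n + 1) := by
      rw [degree_mul, degree_X, S.degree_eq]
      exact_mod_cast (by omega : 1 + j < n + 1)
    have : L (r * S j) = 0 := by
      rw [hr, sub_mul, map_sub, horth (n + 2) j (by omega), mul_right_comm,
        S.map_mul_eq_zero_of_degree_lt L horth hdeg, sub_zero]
    rw [S.map_mul_eq_repr_basis_mul L horth] at this
    exact (mul_eq_zero.1 this).resolve_right (hne j)
  refine ⟨B.repr r (n + 1), B.repr r n, ?_, ?_⟩
  · have := S.eq_C_mul_add_C_mul_of_repr_basis_eq_zero (r := r) (n := n) fun i hn hn' => by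
      rcases Nat.lt_or_ge i n with hi | hi
      · exact hrepr_low hi
      · exact hrepr_high (i := i) (by omega)
    linear_combination this
  · rw [← S.map_mul_eq_repr_basis_mul L horth, hr, sub_mul, map_sub, horth (n + 2) n (by omega),
      sub_zero, mul_right_comm, ← sub_add_cancel (X * S n) (S (n + 1)), add_mul, map_add,
      S.map_mul_eq_zero_of_degree_lt L horth (S.degree_X_mul_sub_lt hS n), zero_add]

end Sequence

lemma exists_recurrence_of_orthogonal_appell {K : Type*} [Field K] {δ : ℕ → K} (h0 : δ 0 = 1)
    (L : K[X] →ₗ[K] K) (horth : ∀ m n, m ≠ n → L (appell δ m * appell δ n) = 0)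
    (hne : ∀ n, L (appell δ n * appell δ n) ≠ 0) :
    ∃ α ≠ 0, ∀ k : ℕ, δ (k + 2) = δ 1 * δ (k + 1) - α * (k + 1) * δ k := by
  let S : Sequence K := ⟨appell δ, degree_appell h0⟩
  have hthree := S.exists_three_term_recurrence L horth hne (monic_appell h0)
  refine ⟨δ 1 ^ 2 - δ 2, fun hα => ?_, fun k => ?_⟩
  · obtain ⟨b, c, hX, hc⟩ := hthree 0
    obtain ⟨rfl, -⟩ := recurrence_of_X_mul_appell h0 hX
    exact hne 1 (by simpa [hα] using hc.symm)
  · obtain ⟨b, c, hX, -⟩ := hthree k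
    obtain ⟨rfl, hrec⟩ := recurrence_of_X_mul_appell h0 hX
    rw [hrec]
    ring

lemma exists_orthogonal_appell_of_recurrence {K : Type*} [Field K] [CharZero K] {δ : ℕ → K}
    (h0 : δ 0 = 1) {α : K} (hα : α ≠ 0)
    (hrec : ∀ k : ℕ, δ (k + 2) = δ 1 * δ (k + 1) - α * (k + 1) * δ k) :
    ∃ L : K[X] →ₗ[K] K, (∀ m n, m ≠ n → L (appell δ m * appell δ n) = 0) ∧
      ∀ n, L (appell δ n * appell δ n) ≠ 0 := by
  let S : Sequence K := ⟨appell δ, degree_appell h0⟩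
  let L := (S.basis S.isUnit_leadingCoeff).coord 0
  have hL (n : ℕ) : L (appell δ n) = if n = 0 then 1 else 0 := by
    rw [Module.Basis.coord_apply, show appell δ n = S n from rfl, S.repr_basis_self,
      Finsupp.single_apply]
  have hL_succ (n : ℕ) : L (appell δ (n + 1)) = 0 := by simp [hL]
  have hX := X_mul_appell_of_recurrence h0 hrec
  refine ⟨L, fun m n hmn => ?_, fun n => ?_⟩
  · rcases hmn.lt_or_gt with h | h
    · exact map_mul_eq_zero_of_recurrence L hX hL_succ (natDegree_appell_le δ) h
    · rw [mul_comm]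
      exact map_mul_eq_zero_of_recurrence L hX hL_succ (natDegree_appell_le δ) h
  · rw [map_mul_self_of_recurrence L hX hL_succ (monic_appell h0 n) (S.natDegree_eq n), hL,
      if_pos rfl, one_mul]
    exact prod_ne_zero_iff.2 fun i _ => mul_ne_zero hα (Nat.cast_add_one_ne_zero i)

end Polynomial

section ExpQuadratic

open Complex

variable (α β : ℂ)

lemma deriv_exp_quadratic :
    deriv (fun z : ℂ => exp (-(α / 2) * z ^ 2 - β * z)) =
      fun z => (-α * z - β) * exp (-(α / 2) * z ^ 2 - β * z) := by
  refine _root_.funext fun z => ?_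
  have h : HasDerivAt (fun z : ℂ => -(α / 2) * z ^ 2 - β * z) (-α * z - β) z :=
    (((hasDerivAt_pow 2 z).const_mul (-(α / 2))).fun_sub
      ((hasDerivAt_id' z).const_mul β)).congr_deriv (by push_cast; ring)
  rw [h.cexp.deriv, mul_comm]

lemma iteratedDeriv_exp_quadratic_add_two (k : ℕ) :
    iteratedDeriv (k + 2) (fun z : ℂ => exp (-(α / 2) * z ^ 2 - β * z)) 0 =
      -β * iteratedDeriv (k + 1) (fun z : ℂ => exp (-(α / 2) * z ^ 2 - β * z)) 0 -
        α * (k + 1) * iteratedDeriv k (fun z : ℂ => exp (-(α / 2) * z ^ 2 - β * z)) 0 := by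
  have hlin (i : ℕ) : iteratedDeriv (i + 1 + 1) (fun z : ℂ => -α * z - β) 0 = 0 := by
    simp [iteratedDeriv_succ', iteratedDeriv_const]
  rw [iteratedDeriv_succ', deriv_exp_quadratic, iteratedDeriv_fun_mul (by fun_prop) (by fun_prop),
    sum_range_succ', sum_range_succ']
  simp only [hlin, mul_zero, zero_mul, sum_const_zero, zero_add]
  simp only [Nat.choose_one_right, Nat.cast_add, Nat.cast_one, neg_mul, iteratedDeriv_one,
    deriv_sub_const_fun, deriv.fun_neg', deriv_const_mul_id', mul_neg, add_tsub_cancel_right,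
    Nat.choose_zero_right, iteratedDeriv_zero, mul_zero, neg_zero, zero_sub, one_mul, tsub_zero]
  ring

lemma eq_iteratedDeriv_exp_quadratic_iff (γ : ℕ → ℂ) :
    (∀ k, γ k = iteratedDeriv k (fun z : ℂ => exp (-(α / 2) * z ^ 2 - β * z)) 0) ↔
      γ 0 = 1 ∧ γ 1 = -β ∧
        ∀ k : ℕ, γ (k + 2) = γ 1 * γ (k + 1) - α * (k + 1) * γ k := by
  have h1 : iteratedDeriv 1 (fun z : ℂ => exp (-(α / 2) * z ^ 2 - β * z)) 0 = -β := by
    rw [iteratedDeriv_one, deriv_exp_quadratic]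
    simp
  constructor
  · intro h
    refine ⟨by simp [h], by rw [h, h1], fun k => ?_⟩
    rw [h (k + 2), h 1, h (k + 1), h k, h1, iteratedDeriv_exp_quadratic_add_two]
  · rintro ⟨h0, h1γ, hrec⟩ k
    induction k using Nat.twoStepInduction with
    | zero => simpa using h0
    | one => rw [h1γ, h1]
    | more k ih ih' => rw [hrec, ih, ih', h1γ, iteratedDeriv_exp_quadratic_add_two]

end ExpQuadratic

/-- The sequence `P n = ∑_{k=0}^n (γ k / k!) D^k[x^n]` is a *monic*
orthogonal polynomial sequence iff the `γ k` are the derivatives at 0 of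
`z ↦ exp(-(α/2)z² - βz)` for some `α ≠ 0`. -/
theorem stmt_2 (γ : ℕ → ℂ) (P : ℕ → Polynomial ℂ)
    (hP : ∀ n : ℕ, P n = ∑ k ∈ Finset.range (n + 1),
      Polynomial.C (γ k / (k.factorial : ℂ)) * Polynomial.derivative^[k] (Polynomial.X ^ n)) :
    ((∀ n : ℕ, (P n).Monic) ∧
      ∃ L : Polynomial ℂ →ₗ[ℂ] ℂ,
        (∀ n : ℕ, (P n).degree = n) ∧
        (∀ m n : ℕ, m ≠ n → L (P m * P n) = 0) ∧
        (∀ n : ℕ, L (P n ^ 2) ≠ 0)) ↔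
    (∃ α β : ℂ, α ≠ 0 ∧
      ∀ k : ℕ, γ k =
        iteratedDeriv k (fun z : ℂ => Complex.exp (-(α / 2) * z ^ 2 - β * z)) 0) := by
  obtain rfl : P = appell γ :=
    funext fun n => (hP n).trans (sum_iterate_derivative_X_pow_eq_appell γ n)
  constructor
  · rintro ⟨hmonic, L, -, horth, hne⟩
    have h0 : γ 0 = 1 := by simpa [appell] using (hmonic 0).leadingCoeff
    obtain ⟨α, hα, hrec⟩ := exists_recurrence_of_orthogonal_appell h0 L horth
      fun n => by simpa only [sq] using hne n
    exact ⟨α, -γ 1, hα,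
      (eq_iteratedDeriv_exp_quadratic_iff α (-γ 1) γ).2 ⟨h0, (neg_neg _).symm, hrec⟩⟩
  · rintro ⟨α, β, hα, hγ⟩
    obtain ⟨h0, -, hrec⟩ := (eq_iteratedDeriv_exp_quadratic_iff α β γ).1 hγ
    obtain ⟨L, horth, hne⟩ := exists_orthogonal_appell_of_recurrence h0 hα hrec
    exact ⟨monic_appell h0, L, degree_appell h0, horth, fun n => by simpa only [sq] using hne n⟩
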